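/- Let (X,φ) be an irreducible expansive dynamical system that can be written as a union of countably many rectangles (with respect to the bracket map at scale ε). Then (X,φ) is synchronizing, i.e., it has at least one synchronizing point. -/

import Mathlib

/-! Since `D_ε` is the projection of a closed subset of `(X × X) × X` along the compact factor,
it is closed, so the closure of a rectangle is again a rectangle. By the Baire category
theorem one of the closed rectangles `closure (R n)` covering `X` has nonempty interior, and
every interior point `x` of a rectangle is synchronizing: `(x, x)` lies in the open set
`interior R ×ˢ interior R ⊆ D_ε`. -/

open Filter Topology Set

namespace Paper

variable {X : Type*} [MetricSpace X] [CompactSpace X]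

/-- The `n`-th iterate (for `n : ℤ`) of the homeomorphism `φ`. -/
def It (φ : X ≃ₜ X) (n : ℤ) : X → X := fun x => (φ.toEquiv ^ n) x

/-- The local stable set `Xˢ(x, ε)`. -/
def locS (φ : X ≃ₜ X) (x : X) (ε : ℝ) : Set X :=
  {y | ∀ n : ℕ, dist (It φ n x) (It φ n y) ≤ ε}

/-- The local unstable set `Xᵘ(x, ε)`. -/
def locU (φ : X ≃ₜ X) (x : X) (ε : ℝ) : Set X :=
  {y | ∀ n : ℕ, dist (It φ (-(n : ℤ)) x) (It φ (-(n : ℤ)) y) ≤ ε}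

/-- The set `D_ε` on which the bracket is defined. -/
def Dset (φ : X ≃ₜ X) (ε : ℝ) : Set (X × X) :=
  {p | (locS φ p.1 ε ∩ locU φ p.2 ε).Nonempty}

/-- `(X, φ)` is expansive with expansiveness constant `εX`. -/
def IsExpansive (φ : X ≃ₜ X) (εX : ℝ) : Prop :=
  0 < εX ∧ ∀ x y : X, (∀ n : ℤ, dist (It φ n x) (It φ n y) ≤ εX) → x = y

/-- The metric is adapted (Fried), with constants `η` and `lam`. -/
def IsAdapted (φ : X ≃ₜ X) (η lam : ℝ) : Prop :=
  0 < η ∧ 0 < lam ∧ lam < 1 ∧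
    (∀ x y : X, y ∈ locS φ x η → dist (φ x) (φ y) ≤ lam * dist x y) ∧
    (∀ x y : X, y ∈ locU φ x η → dist (φ.symm x) (φ.symm y) ≤ lam * dist x y)

/-- `p` is a periodic point of `φ`. -/
def IsPeriodic (φ : X ≃ₜ X) (p : X) : Prop :=
  ∃ n : ℕ, 1 ≤ n ∧ It φ n p = p

/-- `x` is a synchronizing point: `(x, x)` is in the interior of `D_ε` for
some `0 < ε ≤ ε₀`. -/
def IsSyncPt (φ : X ≃ₜ X) (ε₀ : ℝ) (x : X) : Prop :=
  ∃ ε : ℝ, 0 < ε ∧ ε ≤ ε₀ ∧ (x, x) ∈ interior (Dset φ ε)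

/-- `(X, φ)` is irreducible. -/
def Irred (φ : X ≃ₜ X) : Prop :=
  ∀ U V : Set X, IsOpen U → IsOpen V → U.Nonempty → V.Nonempty →
    ∃ n : ℕ, 0 < n ∧ (It φ n '' U ∩ V).Nonempty

/-- `(X, φ)` is mixing. -/
def Mixing (φ : X ≃ₜ X) : Prop :=
  ∀ U V : Set X, IsOpen U → IsOpen V → U.Nonempty → V.Nonempty →
    ∃ N : ℕ, ∀ n : ℕ, N ≤ n → (It φ n '' U ∩ V).Nonempty

/-- Every point of `(X, φ)` is non-wandering. -/
def NonWandering (φ : X ≃ₜ X) : Prop :=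
  ∀ x : X, ∀ U ∈ 𝓝 x, ∃ n : ℕ, 0 < n ∧ (It φ n '' U ∩ U).Nonempty

/-- Stable equivalence `x ∼ₛ y`. -/
def StableEq (φ : X ≃ₜ X) (x y : X) : Prop :=
  Tendsto (fun n : ℕ => dist (It φ n x) (It φ n y)) atTop (𝓝 0)

/-- Unstable equivalence `x ∼ᵤ y`. -/
def UnstableEq (φ : X ≃ₜ X) (x y : X) : Prop :=
  Tendsto (fun n : ℕ => dist (It φ (-(n : ℤ)) x) (It φ (-(n : ℤ)) y)) atTop (𝓝 0)

/-- Local conjugacy `x ∼_lc y`: a homeomorphism `γ : U → V` of open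
neighborhoods with `γ x = y` and `sup_{z ∈ U} d(φⁿ z, φⁿ (γ z)) → 0` as
`n → ±∞`. -/
def LocConj (φ : X ≃ₜ X) (x y : X) : Prop :=
  ∃ (U V : Set X) (γ γinv : X → X),
    IsOpen U ∧ IsOpen V ∧ x ∈ U ∧ y ∈ V ∧ γ x = y ∧
    Set.MapsTo γ U V ∧ Set.MapsTo γinv V U ∧
    (∀ z ∈ U, γinv (γ z) = z) ∧ (∀ w ∈ V, γ (γinv w) = w) ∧
    ContinuousOn γ U ∧ ContinuousOn γinv V ∧
    (∀ ε : ℝ, 0 < ε → ∃ N : ℕ, ∀ n : ℤ, (N : ℤ) ≤ |n| → ∀ z ∈ U,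
      dist (It φ n z) (It φ n (γ z)) ≤ ε)

/-- Stable local conjugacy `x ∼_lcs y`: a homeomorphism of `Xᵘ(x, δ)` onto
its image in `Xᵘ(y, δ')` sending `x` to `y`, uniformly asymptotic in forward
time. -/
def StableLC (φ : X ≃ₜ X) (x y : X) : Prop :=
  ∃ (δ δ' : ℝ) (γ : X → X), 0 < δ ∧ 0 < δ' ∧
    Set.MapsTo γ (locU φ x δ) (locU φ y δ') ∧
    Set.InjOn γ (locU φ x δ) ∧ ContinuousOn γ (locU φ x δ) ∧ γ x = y ∧
    (∀ ε : ℝ, 0 < ε → ∃ N : ℕ, ∀ n : ℕ, N ≤ n → ∀ z ∈ locU φ x δ,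
      dist (It φ n z) (It φ n (γ z)) ≤ ε)

/-- Unstable local conjugacy `x ∼_lcu y`: a homeomorphism of `Xˢ(x, δ)` onto
its image in `Xˢ(y, δ')` sending `x` to `y`, uniformly asymptotic in backward
time. -/
def UnstableLC (φ : X ≃ₜ X) (x y : X) : Prop :=
  ∃ (δ δ' : ℝ) (γ : X → X), 0 < δ ∧ 0 < δ' ∧
    Set.MapsTo γ (locS φ x δ) (locS φ y δ') ∧
    Set.InjOn γ (locS φ x δ) ∧ ContinuousOn γ (locS φ x δ) ∧ γ x = y ∧
    (∀ ε : ℝ, 0 < ε → ∃ N : ℕ, ∀ n : ℕ, N ≤ n → ∀ z ∈ locS φ x δ,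
      dist (It φ (-(n : ℤ)) z) (It φ (-(n : ℤ)) (γ z)) ≤ ε)

omit [CompactSpace X] in
lemma It_eq_coe_zpow (φ : X ≃ₜ X) (n : ℤ) : It φ n = ⇑(φ ^ n) := by
  let toPerm : (X ≃ₜ X) →* Equiv.Perm X := ⟨⟨Homeomorph.toEquiv, rfl⟩, fun _ _ => rfl⟩
  exact congrArg DFunLike.coe (map_zpow toPerm φ n).symm

omit [CompactSpace X] in
lemma continuous_It (φ : X ≃ₜ X) (n : ℤ) : Continuous (It φ n) := by
  rw [It_eq_coe_zpow]
  exact (φ ^ n).continuous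

omit [CompactSpace X] in
lemma isClosed_setOf_mem_locS (φ : X ≃ₜ X) (ε : ℝ) :
    IsClosed {p : X × X | p.2 ∈ locS φ p.1 ε} := by
  simp only [locS, mem_ofPred_eq]
  rw [ofPred_forall]
  exact isClosed_iInter fun n => isClosed_le
    (((continuous_It φ n).comp continuous_fst).dist ((continuous_It φ n).comp continuous_snd))
    continuous_const

omit [CompactSpace X] in
lemma isClosed_setOf_mem_locU (φ : X ≃ₜ X) (ε : ℝ) :
    IsClosed {p : X × X | p.2 ∈ locU φ p.1 ε} := by
  simp only [locU, mem_ofPred_eq]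
  rw [ofPred_forall]
  exact isClosed_iInter fun n => isClosed_le
    (((continuous_It φ _).comp continuous_fst).dist ((continuous_It φ _).comp continuous_snd))
    continuous_const

lemma isClosed_Dset (φ : X ≃ₜ X) (ε : ℝ) : IsClosed (Dset φ ε) := by
  have hD : Dset φ ε =
      Prod.fst '' {q : (X × X) × X | q.2 ∈ locS φ q.1.1 ε ∧ q.2 ∈ locU φ q.1.2 ε} := by
    ext p
    exact ⟨fun ⟨z, hz⟩ => ⟨(p, z), hz, rfl⟩, by rintro ⟨⟨p, z⟩, hz, rfl⟩; exact ⟨z, hz⟩⟩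
  rw [hD]
  refine isClosedMap_fst_of_compactSpace _ (IsClosed.inter ?_ ?_)
  · exact (isClosed_setOf_mem_locS φ ε).preimage (continuous_fst.fst.prodMk continuous_snd)
  · exact (isClosed_setOf_mem_locU φ ε).preimage (continuous_fst.snd.prodMk continuous_snd)

def IsRectangle (φ : X ≃ₜ X) (ε : ℝ) (R : Set X) : Prop :=
  R ×ˢ R ⊆ Dset φ ε

lemma IsRectangle.closure {φ : X ≃ₜ X} {ε : ℝ} {R : Set X} (hR : IsRectangle φ ε R) :
    IsRectangle φ ε (closure R) := by
  rw [IsRectangle, ← closure_prod_eq]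
  exact closure_minimal hR (isClosed_Dset φ ε)

omit [CompactSpace X] in
lemma IsRectangle.mem_interior_Dset {φ : X ≃ₜ X} {ε : ℝ} {R : Set X}
    (hR : IsRectangle φ ε R) {x : X} (hx : x ∈ interior R) : (x, x) ∈ interior (Dset φ ε) :=
  interior_mono hR (by rw [interior_prod_eq]; exact ⟨hx, hx⟩)

theorem countably_rectangled_sync_general [Nonempty X] (φ : X ≃ₜ X) (εX η : ℝ)
    (ε : ℝ) (hε : 0 < ε) (hεle : ε ≤ min η (εX / 2)) (R : ℕ → Set X)
    (hrect : ∀ n : ℕ, ∀ a ∈ R n, ∀ b ∈ R n, (a, b) ∈ Dset φ ε)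
    (hcover : ∀ x : X, ∃ n : ℕ, x ∈ R n) :
    ∃ x : X, IsSyncPt φ (min η (εX / 2)) x := by
  obtain ⟨n, x, hx⟩ := nonempty_interior_of_iUnion_of_closed (f := fun n => closure (R n))
    (fun _ => isClosed_closure)
    (iUnion_eq_univ_iff.2 fun x => (hcover x).imp fun _ hn => subset_closure hn)
  have hRn : IsRectangle φ ε (R n) := fun p hp => hrect n p.1 hp.1 p.2 hp.2
  exact ⟨x, ε, hε, hεle, hRn.closure.mem_interior_Dset hx⟩

/-- an irreducible expansive system that is a countable union of
rectangles has a synchronizing point. -/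
theorem countably_rectangled_sync [Nonempty X] (φ : X ≃ₜ X) (εX η lam : ℝ)
    (hexp : IsExpansive φ εX) (had : IsAdapted φ η lam) (hirr : Irred φ)
    (ε : ℝ) (hε : 0 < ε) (hεle : ε ≤ min η (εX / 2)) (R : ℕ → Set X)
    (hrect : ∀ n : ℕ, ∀ a ∈ R n, ∀ b ∈ R n, (a, b) ∈ Dset φ ε)
    (hcover : ∀ x : X, ∃ n : ℕ, x ∈ R n) :
    ∃ x : X, IsSyncPt φ (min η (εX / 2)) x :=
  countably_rectangled_sync_general φ εX η ε hε hεle R hrect hcover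

end Paper
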